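/- Let p be a nonprincipal ultrafilter on ℕ which is injectively ω*-discrete: for every injective function f from ℕ to the subspace of nonprincipal ultrafilters on ℕ there is A ∈ p such that f '' A is a discrete subspace. Then for every ultrafilter q on ℕ, p ≤_RF q holds if and only if there exists an injective sequence x : ℕ → Ultrafilter ℕ such that q is the p-limit of (x_n). -/

import Mathlib

open Filter Topology

/-- The set of nonprincipal ultrafilters on `ℕ` (the Stone–Čech remainder `ω*`). -/
def omegaStar : Set (Ultrafilter ℕ) := {u : Ultrafilter ℕ | ∀ n : ℕ, u ≠ pure n}

/-!
The `p`-limit of a sequence `φ` in `βℕ` is `p.bind φ`, which gives the forward direction.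
Conversely, let `x` be injective with `p`-limit `q` and pick an infinite `K ∉ q`, so that
`K ∉ x n` for `p`-many `n`. Where `x` takes values in `ω*` it extends to an injection into `ω*`
by ultrafilters containing `K`, and injective `ω*`-discreteness makes `x` discrete on a `p`-large
set; where `x` takes principal values it is discrete anyway. Off that `p`-large set, replace `x` by
distinct principal ultrafilters at points of `K`: the set `K` separates them from the remaining
values of `x`, so the new sequence is injective with discrete range and still has `p`-limit `q`.
-/

open Set Function

namespace Ultrafilter

variable {α β : Type*}

theorem tendsto_nhds_iff_bind_eq {p : Ultrafilter β} {x : β → Ultrafilter α}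
    {q : Ultrafilter α} : Tendsto x p (𝓝 q) ↔ p.bind x = q := by
  rw [Tendsto, ← coe_map, ultrafilter_converges_iff, eq_comm]
  rfl

theorem isDiscrete_iff {s : Set (Ultrafilter α)} :
    IsDiscrete s ↔ ∀ u ∈ s, ∃ D ∈ u, ∀ w ∈ s, D ∈ w → w = u := by
  rw [isDiscrete_iff_forall_mem_exists_isOpen]
  refine forall₂_congr fun u hu => ⟨fun ⟨U, hU, hUs⟩ => ?_, fun ⟨D, hD, hDs⟩ => ?_⟩
  · have huU : u ∈ U := (hUs.symm ▸ mem_singleton u : u ∈ U ∩ s).1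
    obtain ⟨_, ⟨D, rfl⟩, hD, hDU⟩ :=
      ultrafilterBasis_is_basis.exists_subset_of_mem_open huU hU
    exact ⟨D, hD, fun w hw hDw => (hUs.subset ⟨hDU hDw, hw⟩ : w ∈ ({u} : Set _))⟩
  · refine ⟨{w | D ∈ w}, ultrafilter_isOpen_basic D, ?_⟩
    exact Subset.antisymm (fun w ⟨hDw, hw⟩ => hDs w hw hDw)
      (singleton_subset_iff.2 ⟨hD, hu⟩)

theorem isDiscrete_range_pure : IsDiscrete (range (pure : α → Ultrafilter α)) := by
  refine isDiscrete_iff.2 ?_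
  rintro _ ⟨a, rfl⟩
  refine ⟨{a}, mem_pure.2 rfl, ?_⟩
  rintro _ ⟨b, rfl⟩ h
  rw [mem_singleton_iff.1 (mem_pure.1 h)]

theorem exists_infinite_notMem (u : Ultrafilter ℕ) : ∃ K : Set ℕ, K.Infinite ∧ K ∉ u := by
  have hinf : ∀ r, (range fun n => 2 * n + r).Infinite := fun r =>
    infinite_range_of_injective fun a b h => by simpa using h
  by_cases h : range (fun n => 2 * n + 0) ∈ u
  · refine ⟨_, hinf 1, fun h' => ?_⟩
    obtain ⟨_, ⟨a, rfl⟩, b, hab⟩ := u.nonempty_of_mem (inter_mem h h')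
    simp only at hab
    omega
  · exact ⟨_, hinf 0, h⟩

theorem injective_piecewise {x y : ℕ → Ultrafilter α} {s : Set ℕ}
    [DecidablePred (· ∈ s)] {K : Set α} (hx : InjOn x s) (hy : Injective y)
    (hKx : ∀ n ∈ s, K ∉ x n) (hKy : ∀ m, K ∈ y m) : Injective (s.piecewise x y) :=
  (injective_piecewise_iff s).2
    ⟨hx, hy.injOn, fun n hn m _ h => hKx n hn (h ▸ hKy m)⟩

theorem exists_injective_isDiscrete_range_eqOn {x : ℕ → Ultrafilter α}
    {s : Set ℕ} (hx : InjOn x s) (hs : IsDiscrete (x '' s)) {K : Set α} (hK : K.Infinite)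
    (hKx : ∀ n ∈ s, K ∉ x n) :
    ∃ φ : ℕ → Ultrafilter α, Injective φ ∧ IsDiscrete (range φ) ∧ EqOn φ x s := by
  classical
  set e := hK.natEmbedding
  have hKe : ∀ m, K ∈ (pure (e m : α) : Ultrafilter α) := fun m => (e m).2
  refine ⟨s.piecewise x fun m => pure (e m : α),
    injective_piecewise hx (pure_injective.comp (Subtype.val_injective.comp e.injective)) hKx hKe,
    ?_, piecewise_eqOn s _ _⟩
  rw [range_piecewise, isDiscrete_iff]
  rintro _ (⟨n, hn, rfl⟩ | ⟨m, -, rfl⟩)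
  · obtain ⟨D, hD, hDs⟩ := isDiscrete_iff.1 hs _ (mem_image_of_mem x hn)
    refine ⟨D \ K, sdiff_mem hD (compl_mem_iff_notMem.2 (hKx n hn)), ?_⟩
    rintro _ (⟨n', hn', rfl⟩ | ⟨m, -, rfl⟩) hDw
    · exact hDs _ (mem_image_of_mem x hn') (mem_of_superset hDw sdiff_subset)
    · exact absurd (hKe m) (Ultrafilter.mem_pure.1 hDw).2
  · refine ⟨{(e m : α)}, Ultrafilter.mem_pure.2 rfl, ?_⟩
    rintro _ (⟨n, hn, rfl⟩ | ⟨m', -, rfl⟩) hw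
    · exact absurd (mem_of_superset hw (singleton_subset_iff.2 (e m).2)) (hKx n hn)
    · simp only [Ultrafilter.mem_pure, mem_singleton_iff] at hw ⊢
      rw [hw]

end Ultrafilter

open Ultrafilter

theorem exists_injective_forall_mem_omegaStar {K : Set ℕ} (hK : K.Infinite) :
    ∃ v : ℕ → Ultrafilter ℕ, Injective v ∧ ∀ m, v m ∈ omegaStar ∧ K ∈ v m := by
  set e := hK.natEmbedding
  set g : ℕ → ℕ → ℕ := fun m i => e (Nat.pair m i)
  have hg : ∀ m, Injective (g m) := fun m i j h => by
    simpa using e.injective (Subtype.ext h)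
  refine ⟨fun m => (hyperfilter ℕ).map (g m), fun m m' h => ?_,
    fun m => ⟨fun n hn => ?_, ?_⟩⟩
  · have hm : range (g m) ∈ (hyperfilter ℕ).map (g m') := by
      simp only at h
      exact h ▸ range_mem_map
    obtain ⟨_, ⟨i, rfl⟩, j, hij⟩ := Ultrafilter.nonempty_of_mem (inter_mem hm range_mem_map)
    exact (Nat.pair_eq_pair.1 (e.injective (Subtype.ext hij))).1.symm
  · have : g m ⁻¹' {n} ∈ hyperfilter ℕ := by
      simp only at hn
      exact Ultrafilter.mem_map.1 (hn ▸ Ultrafilter.mem_pure.2 rfl)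
    exact ((finite_singleton n).preimage (hg m).injOn).notMem_hyperfilter this
  · exact Ultrafilter.mem_map.2 (univ_mem' fun i => (e _).2)

theorem exists_injective_omegaStar_eqOn {x : ℕ → Ultrafilter ℕ} {s : Set ℕ}
    (hx : InjOn x s) (hs : ∀ n ∈ s, x n ∈ omegaStar) {K : Set ℕ} (hK : K.Infinite)
    (hKx : ∀ n ∈ s, K ∉ x n) :
    ∃ f : ℕ → omegaStar, Injective f ∧ ∀ n ∈ s, (f n : Ultrafilter ℕ) = x n := by
  classical
  obtain ⟨v, hv, hvK⟩ := exists_injective_forall_mem_omegaStar hK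
  have hmem : ∀ n, s.piecewise x v n ∈ omegaStar := fun n => by
    by_cases hn : n ∈ s
    · simpa [hn] using hs n hn
    · simpa [hn] using (hvK n).1
  exact ⟨codRestrict _ _ hmem, (injective_codRestrict hmem).2
    (injective_piecewise hx hv hKx fun m => (hvK m).2), fun n hn => piecewise_eq_of_mem _ _ _ hn⟩

def InjectivelyOmegaStarDiscrete (p : Ultrafilter ℕ) : Prop :=
  ∀ f : ℕ → omegaStar, Injective f → ∃ A ∈ p, DiscreteTopology (f '' A)

theorem exists_mem_isDiscrete_image {p : Ultrafilter ℕ} (hdisc : InjectivelyOmegaStarDiscrete p)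
    {x : ℕ → Ultrafilter ℕ} (hx : Injective x) {K : Set ℕ} (hK : K.Infinite)
    (hKx : {n | K ∉ x n} ∈ p) :
    ∃ t ∈ p, (∀ n ∈ t, K ∉ x n) ∧ IsDiscrete (x '' t) := by
  set S := {n | x n ∈ omegaStar}
  by_cases hS : S ∈ p
  · obtain ⟨f, hf, hfx⟩ := exists_injective_omegaStar_eqOn (s := {n | K ∉ x n} ∩ S)
      hx.injOn (fun n hn => hn.2) hK (fun n hn => hn.1)
    obtain ⟨A, hA, hAf⟩ := hdisc f hf
    refine ⟨A ∩ ({n | K ∉ x n} ∩ S), inter_mem hA (inter_mem hKx hS),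
      fun n hn => hn.2.1, ?_⟩
    refine ((isDiscrete_iff_discreteTopology.2 hAf).image IsInducing.subtypeVal).mono ?_
    rintro _ ⟨n, hn, rfl⟩
    exact ⟨f n, mem_image_of_mem f hn.1, hfx n hn.2⟩
  · refine ⟨{n | K ∉ x n} ∩ Sᶜ, inter_mem hKx (compl_mem_iff_notMem.2 hS),
      fun n hn => hn.1, isDiscrete_range_pure.mono ?_⟩
    rintro _ ⟨n, hn, rfl⟩
    simpa [S, omegaStar, eq_comm] using hn.2

theorem exists_injective_isDiscrete_range_eventuallyEq {p : Ultrafilter ℕ}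
    (hdisc : InjectivelyOmegaStarDiscrete p) {x : ℕ → Ultrafilter ℕ} (hx : Injective x) :
    ∃ φ : ℕ → Ultrafilter ℕ, Injective φ ∧ IsDiscrete (range φ) ∧ φ =ᶠ[p] x := by
  obtain ⟨K, hK, hKq⟩ := exists_infinite_notMem (p.bind x)
  have hKx : {n | K ∉ x n} ∈ p := by
    have hKq' : {n | Kᶜ ∈ x n} ∈ p := compl_mem_iff_notMem.2 hKq
    simpa only [compl_mem_iff_notMem] using hKq'
  obtain ⟨t, ht, htK, htd⟩ := exists_mem_isDiscrete_image hdisc hx hK hKx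
  obtain ⟨φ, hφ, hφd, hφx⟩ := exists_injective_isDiscrete_range_eqOn hx.injOn htd hK htK
  exact ⟨φ, hφ, hφd, mem_of_superset ht hφx⟩

theorem rudinFrolik_iff_injective_limit_general (p : Ultrafilter ℕ)
    (hdisc : ∀ f : ℕ → ↥omegaStar, Function.Injective f →
      ∃ A ∈ p, DiscreteTopology ↥(f '' A)) :
    ∀ q : Ultrafilter ℕ,
      (∃ φ : ℕ → Ultrafilter ℕ, Function.Injective φ ∧
        DiscreteTopology ↥(Set.range φ) ∧ p.bind φ = q) ↔
      (∃ x : ℕ → Ultrafilter ℕ, Function.Injective x ∧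
        Filter.Tendsto x ↑p (𝓝 q)) := by
  intro q
  refine ⟨fun ⟨φ, hφ, _, hφq⟩ => ⟨φ, hφ, tendsto_nhds_iff_bind_eq.2 hφq⟩, ?_⟩
  rintro ⟨x, hx, hxq⟩
  obtain ⟨φ, hφ, hφd, hφx⟩ := exists_injective_isDiscrete_range_eventuallyEq hdisc hx
  exact ⟨φ, hφ, hφd.to_subtype, tendsto_nhds_iff_bind_eq.1 (hxq.congr' hφx.symm)⟩

/-- If `p` is a nonprincipal injectively `ω*`-discrete ultrafilter on `ℕ`,
then for any ultrafilter `q`, `p ≤_RF q` iff `q` is the `p`-limit of some injective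
sequence in `βℕ`. -/
theorem rudinFrolik_iff_injective_limit (p : Ultrafilter ℕ)
    (hp : ∀ n : ℕ, p ≠ pure n)
    (hdisc : ∀ f : ℕ → ↥omegaStar, Function.Injective f →
      ∃ A ∈ p, DiscreteTopology ↥(f '' A)) :
    ∀ q : Ultrafilter ℕ,
      (∃ φ : ℕ → Ultrafilter ℕ, Function.Injective φ ∧
        DiscreteTopology ↥(Set.range φ) ∧ p.bind φ = q) ↔
      (∃ x : ℕ → Ultrafilter ℕ, Function.Injective x ∧
        Filter.Tendsto x ↑p (𝓝 q)) :=
  rudinFrolik_iff_injective_limit_general p hdisc
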